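/- Let f ∈ L¹(ℝ) and let y ∈ ℝ be a Lebesgue point of f. Then the Poisson integral u(x₁, x₂) = ∫_ℝ (1/π)·x₂/((x₁−t)² + x₂²) f(t) dt converges to f(y) as (x₁,x₂) → (y,0) nontangentially, i.e., within any cone Γ_α(y) = {(x₁,x₂) : x₂ > 0, |x₁ − y| < α·x₂}, α > 0. -/

import Mathlib

/-!
For `|x - y| ≤ α b` the kernels compare pointwise, `P(x, b, t) ≤ 2 (1 + α²) P(y, b, t)`, so
nontangential convergence reduces to vertical convergence of `∫ P(y, b, t) |f t - f y| dt` to `0`.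
Near `y`, the Lebesgue point condition says that the measure `ν = |f - f y| dt` restricted to a
small ball satisfies `ν (B(y, r)) ≤ ε r` for all `r`; since `{t | u ≤ P(y, b, t)}` lies in the ball
of radius `√(b / (π u))`, the layer cake formula gives `∫ P(y, b, ·) dν ≤ 2 ε / π` uniformly in `b`.
Away from `y` the kernel is `O(b)`.
-/

open MeasureTheory Real Filter Set Metric Topology

noncomputable def halfPlanePoissonKernel (x b t : ℝ) : ℝ := 1 / π * b / ((x - t) ^ 2 + b ^ 2)

def IsLebesguePoint (f : ℝ → ℝ) (y : ℝ) : Prop :=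
  Tendsto (fun s : ℝ => 1 / (2 * s) * ∫ t in y - s..y + s, |f t - f y|) (𝓝[>] 0) (𝓝 0)

theorem Real.arctan_le_self {z : ℝ} (hz : 0 ≤ z) : arctan z ≤ z := by
  simpa only [tan_arctan] using le_tan (arctan_nonneg.2 hz) (arctan_lt_pi_div_two z)

section PoissonKernel

variable {x y b t δ : ℝ}

theorem halfPlanePoissonKernel_nonneg (hb : 0 ≤ b) : 0 ≤ halfPlanePoissonKernel x b t := by
  unfold halfPlanePoissonKernel; positivity

theorem halfPlanePoissonKernel_le (hb : 0 < b) : halfPlanePoissonKernel x b t ≤ 1 / (π * b) := by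
  calc halfPlanePoissonKernel x b t ≤ 1 / π * b / b ^ 2 := by
        unfold halfPlanePoissonKernel; gcongr; nlinarith [sq_nonneg (x - t)]
    _ = 1 / (π * b) := by field_simp

theorem halfPlanePoissonKernel_le_of_le_abs_sub (hb : 0 ≤ b) (hδ : 0 < δ) (ht : δ ≤ |t - x|) :
    halfPlanePoissonKernel x b t ≤ b / (π * δ ^ 2) := by
  have : δ ^ 2 ≤ (x - t) ^ 2 := by
    rw [← sq_abs (x - t), abs_sub_comm]; exact pow_le_pow_left₀ hδ.le ht 2
  calc halfPlanePoissonKernel x b t ≤ 1 / π * b / δ ^ 2 := by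
        unfold halfPlanePoissonKernel; gcongr; nlinarith [sq_nonneg b]
    _ = b / (π * δ ^ 2) := by field_simp

theorem measurable_halfPlanePoissonKernel : Measurable (halfPlanePoissonKernel x b) := by
  unfold halfPlanePoissonKernel; fun_prop

theorem halfPlanePoissonKernel_eq_mul_inv_one_add_sq (hb : b ≠ 0) :
    halfPlanePoissonKernel x b t = 1 / (π * b) * (1 + ((t - x) / b) ^ 2)⁻¹ := by
  unfold halfPlanePoissonKernel
  have : (x - t) ^ 2 = (t - x) ^ 2 := by ring
  field_simp
  ring

theorem integrable_halfPlanePoissonKernel (hb : b ≠ 0) :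
    Integrable (halfPlanePoissonKernel x b) := by
  refine (((integrable_inv_one_add_sq.comp_div hb).comp_sub_right x).const_mul
    (1 / (π * b))).congr ?_
  exact .of_forall fun t ↦ (halfPlanePoissonKernel_eq_mul_inv_one_add_sq hb).symm

theorem integral_halfPlanePoissonKernel (hb : 0 < b) : ∫ t, halfPlanePoissonKernel x b t = 1 := by
  simp_rw [halfPlanePoissonKernel_eq_mul_inv_one_add_sq hb.ne', integral_const_mul]
  rw [integral_sub_right_eq_self (fun t ↦ (1 + (t / b) ^ 2)⁻¹) x,
    Measure.integral_comp_div (fun s ↦ (1 + s ^ 2)⁻¹) b, integral_univ_inv_one_add_sq,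
    smul_eq_mul, abs_of_pos hb]
  field_simp

theorem integral_closedBall_halfPlanePoissonKernel (hb : 0 < b) (hδ : 0 ≤ δ) :
    ∫ t in closedBall x δ, halfPlanePoissonKernel x b t = 2 / π * arctan (δ / b) := by
  rw [closedBall_eq_Icc, integral_Icc_eq_integral_Ioc,
    ← intervalIntegral.integral_of_le (by linarith)]
  simp_rw [halfPlanePoissonKernel_eq_mul_inv_one_add_sq hb.ne', intervalIntegral.integral_const_mul]
  rw [intervalIntegral.integral_comp_sub_right (fun t ↦ (1 + (t / b) ^ 2)⁻¹),
    intervalIntegral.integral_comp_div (fun s ↦ (1 + s ^ 2)⁻¹) hb.ne', integral_inv_one_add_sq]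
  simp only [add_sub_cancel_left, sub_sub_cancel_left, neg_div, arctan_neg, smul_eq_mul]
  field_simp
  ring

theorem integral_compl_closedBall_halfPlanePoissonKernel_le (hb : 0 < b) (hδ : 0 < δ) :
    ∫ t in (closedBall x δ)ᶜ, halfPlanePoissonKernel x b t ≤ 2 / π * (b / δ) := by
  have hsplit := integral_add_compl (measurableSet_closedBall (x := x) (ε := δ))
    (integrable_halfPlanePoissonKernel (x := x) hb.ne')
  rw [integral_halfPlanePoissonKernel hb, integral_closedBall_halfPlanePoissonKernel hb hδ.le]
    at hsplit
  have hinv : arctan (b / δ) = π / 2 - arctan (δ / b) := by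
    rw [← inv_div, arctan_inv_of_pos (by positivity)]
  have := arctan_le_self (div_pos hb hδ).le
  calc ∫ t in (closedBall x δ)ᶜ, halfPlanePoissonKernel x b t = 2 / π * arctan (b / δ) := by
        rw [hinv, mul_sub, show 2 / π * (π / 2) = 1 by field_simp]; linarith
    _ ≤ 2 / π * (b / δ) := by gcongr

theorem halfPlanePoissonKernel_le_of_abs_sub_le {α : ℝ} (hb : 0 < b)
    (h : |x - y| ≤ α * b) :
    halfPlanePoissonKernel x b t ≤ 2 * (1 + α ^ 2) * halfPlanePoissonKernel y b t := by
  have hxy : (x - y) ^ 2 ≤ α ^ 2 * b ^ 2 := by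
    rw [← sq_abs, ← mul_pow]; exact pow_le_pow_left₀ (abs_nonneg _) h 2
  have key : (y - t) ^ 2 + b ^ 2 ≤ 2 * (1 + α ^ 2) * ((x - t) ^ 2 + b ^ 2) := by
    nlinarith [sq_nonneg (x + y - 2 * t), mul_nonneg (sq_nonneg α) (sq_nonneg (x - t))]
  unfold halfPlanePoissonKernel
  rw [← mul_div_assoc, div_le_div_iff₀ (by positivity) (by positivity)]
  have : 0 ≤ 1 / π * b := by positivity
  nlinarith [mul_le_mul_of_nonneg_left key this]

theorem setOf_le_halfPlanePoissonKernel_subset {u : ℝ} (hb : 0 < b) (hu : 0 < u) :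
    {t | u ≤ halfPlanePoissonKernel x b t} ⊆ closedBall x √(b / (π * u)) := by
  intro t ht
  have hD : 0 < (x - t) ^ 2 + b ^ 2 := by positivity
  have : (x - t) ^ 2 + b ^ 2 ≤ b / (π * u) := by
    have ht : u ≤ 1 / π * b / ((x - t) ^ 2 + b ^ 2) := ht
    rw [le_div_iff₀ hD] at ht
    rw [le_div_iff₀ (by positivity)]
    have := mul_le_mul_of_nonneg_right ht pi_pos.le
    rw [show 1 / π * b * π = b by field_simp] at this
    linarith
  rw [mem_closedBall, dist_comm, dist_eq, abs_sub_comm]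
  exact abs_le_sqrt (by nlinarith [sq_nonneg b])

theorem integral_rpow_neg_one_half (M : ℝ) :
    ∫ u in (0)..M, u ^ (-(1 / 2) : ℝ) = 2 * √M := by
  rw [integral_rpow (by norm_num), zero_rpow (by norm_num), sqrt_eq_rpow]
  norm_num
  ring

theorem lintegral_halfPlanePoissonKernel_le {μ : Measure ℝ} {ε : ℝ} (hb : 0 < b) (hε : 0 ≤ ε)
    (hμ : ∀ r, 0 < r → μ (closedBall x r) ≤ ENNReal.ofReal (ε * r)) :
    ∫⁻ t, ENNReal.ofReal (halfPlanePoissonKernel x b t) ∂μ ≤ ENNReal.ofReal (2 * ε / π) := by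
  set M := 1 / (π * b)
  have hM : 0 < M := by positivity
  set G : ℝ → ℝ := fun u ↦ ε * √(b / π) * u ^ (-(1 / 2) : ℝ)
  have hlevel : ∀ u ∈ Ioi (0 : ℝ), μ {t | u ≤ halfPlanePoissonKernel x b t} ≤
      (Ioc 0 M).indicator (fun u ↦ ENNReal.ofReal (G u)) u := by
    intro u (hu : 0 < u)
    by_cases huM : u ≤ M
    · rw [indicator_of_mem (show u ∈ Ioc 0 M from ⟨hu, huM⟩)]
      calc μ {t | u ≤ halfPlanePoissonKernel x b t} ≤ μ (closedBall x √(b / (π * u))) :=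
            measure_mono (setOf_le_halfPlanePoissonKernel_subset hb hu)
        _ ≤ ENNReal.ofReal (ε * √(b / (π * u))) := hμ _ (by positivity)
        _ = ENNReal.ofReal (G u) := by
          simp only [G]
          rw [rpow_neg hu.le, ← sqrt_eq_rpow, ← sqrt_inv, mul_assoc, ← sqrt_mul (by positivity)]
          ring_nf
    · have : {t | u ≤ halfPlanePoissonKernel x b t} = ∅ :=
        eq_empty_of_forall_notMem fun t ht ↦ huM (le_trans ht (halfPlanePoissonKernel_le hb))
      simp [this]
  have hG : IntegrableOn G (Ioc 0 M) :=
    ((intervalIntegrable_iff_integrableOn_Ioc_of_le hM.le).1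
      (intervalIntegral.intervalIntegrable_rpow' (by norm_num))).const_mul _
  calc ∫⁻ t, ENNReal.ofReal (halfPlanePoissonKernel x b t) ∂μ
      = ∫⁻ u in Ioi 0, μ {t | u ≤ halfPlanePoissonKernel x b t} :=
        lintegral_eq_lintegral_meas_le μ (.of_forall fun _ ↦ halfPlanePoissonKernel_nonneg hb.le)
          measurable_halfPlanePoissonKernel.aemeasurable
    _ ≤ ∫⁻ u in Ioi 0, (Ioc 0 M).indicator (fun u ↦ ENNReal.ofReal (G u)) u :=
        setLIntegral_mono' measurableSet_Ioi hlevel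
    _ ≤ ∫⁻ u in Ioc 0 M, ENNReal.ofReal (G u) := by
        rw [← lintegral_indicator measurableSet_Ioc]; exact setLIntegral_le_lintegral _ _
    _ = ENNReal.ofReal (∫ u in (0)..M, G u) := by
        rw [intervalIntegral.integral_of_le hM.le, ofReal_integral_eq_lintegral_ofReal hG]
        filter_upwards [self_mem_ae_restrict measurableSet_Ioc] with u hu
        have := hu.1
        positivity
    _ = ENNReal.ofReal (2 * ε / π) := by
        rw [intervalIntegral.integral_const_mul, integral_rpow_neg_one_half]
        congr 1
        calc ε * √(b / π) * (2 * √M) = 2 * ε * √(b / π * M) := by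
              rw [sqrt_mul (by positivity)]; ring
          _ = 2 * ε / π := by
              rw [show b / π * M = (1 / π) ^ 2 by simp only [M]; field_simp,
                sqrt_sq (by positivity)]
              ring

theorem setIntegral_closedBall_halfPlanePoissonKernel_mul_le {g : ℝ → ℝ} {ε : ℝ} (hb : 0 < b)
    (hδ : 0 < δ) (hε : 0 ≤ ε) (hg0 : ∀ t, 0 ≤ g t) (hg : IntegrableOn g (closedBall x δ))
    (hgx : ∀ s, 0 < s → s ≤ δ → ∫ t in closedBall x s, g t ≤ ε * s) :
    ∫ t in closedBall x δ, halfPlanePoissonKernel x b t * g t ≤ 2 * ε / π := by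
  -- restricting to `closedBall x δ` makes the growth bound hold for all radii, not only `r ≤ δ`
  set ν := (volume.restrict (closedBall x δ)).withDensity fun t ↦ ENNReal.ofReal (g t)
  have hν : ∀ r, 0 < r → ν (closedBall x r) ≤ ENNReal.ofReal (ε * r) := by
    intro r hr
    have hball : closedBall x r ∩ closedBall x δ = closedBall x (min r δ) := by
      ext t; simp
    rw [withDensity_apply _ measurableSet_closedBall,
      Measure.restrict_restrict measurableSet_closedBall, hball,
      ← ofReal_integral_eq_lintegral_ofReal (hg.mono_set (closedBall_subset_closedBall
        (min_le_right r δ))) (.of_forall hg0)]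
    gcongr
    exact (hgx _ (lt_min hr hδ) (min_le_right r δ)).trans
      (mul_le_mul_of_nonneg_left (min_le_left r δ) hε)
  have hgm := hg.aestronglyMeasurable
  calc ∫ t in closedBall x δ, halfPlanePoissonKernel x b t * g t
      = (∫⁻ t, ENNReal.ofReal (halfPlanePoissonKernel x b t) ∂ν).toReal := by
        rw [integral_eq_lintegral_of_nonneg_ae
            (.of_forall fun t ↦ mul_nonneg (halfPlanePoissonKernel_nonneg hb.le) (hg0 t))
            (measurable_halfPlanePoissonKernel.aestronglyMeasurable.mul hgm),
          lintegral_withDensity_eq_lintegral_mul₀ hgm.aemeasurable.ennreal_ofReal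
            measurable_halfPlanePoissonKernel.ennreal_ofReal.aemeasurable]
        simp_rw [Pi.mul_apply, ← ENNReal.ofReal_mul (hg0 _), mul_comm]
    _ ≤ 2 * ε / π :=
        ENNReal.toReal_le_of_le_ofReal (by positivity)
          (lintegral_halfPlanePoissonKernel_le hb hε hν)

section Integrable

variable {f : ℝ → ℝ} (hf : Integrable f) (c : ℝ)
include hf

theorem MeasureTheory.Integrable.halfPlanePoissonKernel_mul (hb : 0 < b) :
    Integrable fun t ↦ halfPlanePoissonKernel x b t * f t :=
  hf.bdd_mul measurable_halfPlanePoissonKernel.aestronglyMeasurable (.of_forall fun _ ↦ by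
    rw [norm_of_nonneg (halfPlanePoissonKernel_nonneg hb.le)]; exact halfPlanePoissonKernel_le hb)

theorem MeasureTheory.Integrable.halfPlanePoissonKernel_mul_abs_sub (hb : 0 < b) :
    Integrable fun t ↦ halfPlanePoissonKernel x b t * |f t - c| := by
  refine ((hf.halfPlanePoissonKernel_mul (x := x) hb).sub
    ((integrable_halfPlanePoissonKernel (x := x) hb.ne').mul_const c)).abs.congr
    (.of_forall fun t ↦ ?_)
  simp only [Pi.sub_apply]
  rw [← mul_sub, abs_mul, abs_of_nonneg (halfPlanePoissonKernel_nonneg hb.le)]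

theorem abs_integral_halfPlanePoissonKernel_mul_sub_le (hb : 0 < b) :
    |(∫ t, halfPlanePoissonKernel x b t * f t) - c| ≤
      ∫ t, halfPlanePoissonKernel x b t * |f t - c| := by
  have hc : ∫ t, halfPlanePoissonKernel x b t * c = c := by
    rw [integral_mul_const, integral_halfPlanePoissonKernel hb, one_mul]
  calc |(∫ t, halfPlanePoissonKernel x b t * f t) - c|
      = |∫ t, halfPlanePoissonKernel x b t * (f t - c)| := by
        simp only [mul_sub]
        rw [integral_sub (hf.halfPlanePoissonKernel_mul hb)
          ((integrable_halfPlanePoissonKernel hb.ne').mul_const c), hc]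
    _ ≤ ∫ t, |halfPlanePoissonKernel x b t * (f t - c)| := abs_integral_le_integral_abs
    _ = ∫ t, halfPlanePoissonKernel x b t * |f t - c| := by
        simp only [abs_mul, abs_of_nonneg (halfPlanePoissonKernel_nonneg hb.le)]

theorem abs_integral_halfPlanePoissonKernel_mul_sub_le_of_abs_sub_le {α : ℝ} (hb : 0 < b)
    (h : |x - y| ≤ α * b) :
    |(∫ t, halfPlanePoissonKernel x b t * f t) - c| ≤
      2 * (1 + α ^ 2) * ∫ t, halfPlanePoissonKernel y b t * |f t - c| := by
  rw [← integral_const_mul]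
  refine (abs_integral_halfPlanePoissonKernel_mul_sub_le hf c hb).trans
    (integral_mono (hf.halfPlanePoissonKernel_mul_abs_sub c hb)
      ((hf.halfPlanePoissonKernel_mul_abs_sub c hb).const_mul _) fun t ↦ ?_)
  rw [← mul_assoc]
  exact mul_le_mul_of_nonneg_right (halfPlanePoissonKernel_le_of_abs_sub_le hb h) (abs_nonneg _)

theorem setIntegral_compl_closedBall_halfPlanePoissonKernel_mul_abs_sub_le (hb : 0 < b)
    (hδ : 0 < δ) :
    ∫ t in (closedBall x δ)ᶜ, halfPlanePoissonKernel x b t * |f t - c| ≤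
      ((∫ t, |f t|) / (π * δ ^ 2) + 2 * |c| / (π * δ)) * b := by
  have hpoint : ∀ t ∈ (closedBall x δ)ᶜ, halfPlanePoissonKernel x b t * |f t - c| ≤
      b / (π * δ ^ 2) * |f t| + |c| * halfPlanePoissonKernel x b t := by
    intro t ht
    have hδt : δ ≤ |t - x| := by
      have ht : ¬dist t x ≤ δ := ht
      rw [← dist_eq]; exact (not_le.1 ht).le
    have hP := halfPlanePoissonKernel_nonneg (x := x) (t := t) hb.le
    calc halfPlanePoissonKernel x b t * |f t - c|
        ≤ halfPlanePoissonKernel x b t * |f t| + |c| * halfPlanePoissonKernel x b t := by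
          nlinarith [abs_sub (f t) c]
      _ ≤ b / (π * δ ^ 2) * |f t| + |c| * halfPlanePoissonKernel x b t := by
          gcongr; exact halfPlanePoissonKernel_le_of_le_abs_sub hb.le hδ hδt
  have hP := integrable_halfPlanePoissonKernel (x := x) hb.ne'
  calc ∫ t in (closedBall x δ)ᶜ, halfPlanePoissonKernel x b t * |f t - c|
      ≤ ∫ t in (closedBall x δ)ᶜ, (b / (π * δ ^ 2) * |f t| + |c| * halfPlanePoissonKernel x b t) :=
        setIntegral_mono_on (hf.halfPlanePoissonKernel_mul_abs_sub c hb).integrableOn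
          ((hf.abs.const_mul _).add (hP.const_mul _)).integrableOn
          measurableSet_closedBall.compl hpoint
    _ = b / (π * δ ^ 2) * (∫ t in (closedBall x δ)ᶜ, |f t|) +
          |c| * ∫ t in (closedBall x δ)ᶜ, halfPlanePoissonKernel x b t := by
        rw [integral_add (hf.abs.const_mul _).integrableOn (hP.const_mul _).integrableOn,
          integral_const_mul, integral_const_mul]
    _ ≤ b / (π * δ ^ 2) * (∫ t, |f t|) + |c| * (2 / π * (b / δ)) := by
        refine add_le_add (mul_le_mul_of_nonneg_left ?_ (by positivity))
          (mul_le_mul_of_nonneg_left ?_ (abs_nonneg c))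
        · exact setIntegral_le_integral hf.abs (.of_forall fun _ ↦ abs_nonneg _)
        · exact integral_compl_closedBall_halfPlanePoissonKernel_le hb hδ
    _ = ((∫ t, |f t|) / (π * δ ^ 2) + 2 * |c| / (π * δ)) * b := by ring

end Integrable

end PoissonKernel

theorem IsLebesguePoint.exists_forall_integral_closedBall_abs_sub_le {f : ℝ → ℝ} {y : ℝ}
    (hy : IsLebesguePoint f y) {ε : ℝ} (hε : 0 < ε) :
    ∃ δ > 0, ∀ s, 0 < s → s ≤ δ → ∫ t in closedBall y s, |f t - f y| ≤ ε * s := by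
  obtain ⟨δ, hδ, hsub⟩ := mem_nhdsGT_iff_exists_Ioc_subset.1 (hy (Iio_mem_nhds (half_pos hε)))
  refine ⟨δ, hδ, fun s hs hsδ ↦ ?_⟩
  have h : 1 / (2 * s) * ∫ t in y - s..y + s, |f t - f y| < ε / 2 := hsub ⟨hs, hsδ⟩
  rw [one_div, inv_mul_lt_iff₀ (by positivity)] at h
  rw [closedBall_eq_Icc, integral_Icc_eq_integral_Ioc,
    ← intervalIntegral.integral_of_le (by linarith)]
  linarith

theorem IsLebesguePoint.tendsto_integral_halfPlanePoissonKernel_mul_abs_sub {f : ℝ → ℝ} {y : ℝ}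
    (hy : IsLebesguePoint f y) (hf : Integrable f) :
    Tendsto (fun b ↦ ∫ t, halfPlanePoissonKernel y b t * |f t - f y|) (𝓝[>] 0) (𝓝 0) := by
  refine tendsto_order.2 ⟨fun a ha ↦ ?_, fun a ha ↦ ?_⟩
  · filter_upwards [self_mem_nhdsWithin] with b (hb : 0 < b)
    exact ha.trans_le (integral_nonneg fun t ↦
      mul_nonneg (halfPlanePoissonKernel_nonneg hb.le) (abs_nonneg _))
  obtain ⟨δ, hδ, hloc⟩ :=
    hy.exists_forall_integral_closedBall_abs_sub_le (show 0 < π * a / 4 by positivity)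
  set K := (∫ t, |f t|) / (π * δ ^ 2) + 2 * |f y| / (π * δ)
  have hK : Tendsto (fun b ↦ K * b) (𝓝[>] 0) (𝓝 0) := by
    simpa using ((continuous_const_mul K).tendsto 0).mono_left nhdsWithin_le_nhds
  filter_upwards [self_mem_nhdsWithin, hK (Iio_mem_nhds (half_pos ha))]
    with b (hb : 0 < b) (hKb : K * b < a / 2)
  have hnear := setIntegral_closedBall_halfPlanePoissonKernel_mul_le (g := fun t ↦ |f t - f y|)
    hb hδ (by positivity) (fun t ↦ abs_nonneg _)
    (hf.integrableOn.sub (integrableOn_const measure_closedBall_lt_top.ne)).abs hloc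
  have hfar :=
    setIntegral_compl_closedBall_halfPlanePoissonKernel_mul_abs_sub_le (x := y) hf (f y) hb hδ
  rw [← integral_add_compl (measurableSet_closedBall (x := y) (ε := δ))
    (hf.halfPlanePoissonKernel_mul_abs_sub _ hb)]
  have : 2 * (π * a / 4) / π = a / 2 := by field_simp; ring
  linarith

/-- At every Lebesgue point `y` of `f ∈ L¹(ℝ)`, the Poisson integral of
`f` converges to `f(y)` nontangentially, i.e. within every cone
`Γ_α(y) = {(x₁,x₂) : x₂ > 0, |x₁−y| < α·x₂}`. -/
theorem poisson_integral_nontangential_convergence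
    (f : ℝ → ℝ) (hf : Integrable f volume) (y : ℝ)
    (hy : Tendsto (fun s : ℝ => (1 / (2 * s)) * ∫ t in y - s..y + s, |f t - f y|)
      (nhdsWithin 0 (Set.Ioi 0)) (nhds 0)) :
    ∀ α : ℝ, 0 < α →
      Tendsto (fun p : ℝ × ℝ => ∫ t, (1 / π) * p.2 / ((p.1 - t) ^ 2 + p.2 ^ 2) * f t)
        (nhdsWithin (y, 0) {p : ℝ × ℝ | 0 < p.2 ∧ |p.1 - y| < α * p.2})
        (nhds (f y)) := by
  intro α _
  have hsnd : Tendsto Prod.snd (𝓝[{p : ℝ × ℝ | 0 < p.2 ∧ |p.1 - y| < α * p.2}] (y, 0)) (𝓝[>] 0) :=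
    tendsto_nhdsWithin_of_tendsto_nhds_of_eventually_within _
      continuous_snd.continuousWithinAt.tendsto (eventually_nhdsWithin_of_forall fun p hp ↦ hp.1)
  rw [tendsto_iff_norm_sub_tendsto_zero]
  refine squeeze_zero' (.of_forall fun _ ↦ norm_nonneg _) ?_ (by
    simpa using ((IsLebesguePoint.tendsto_integral_halfPlanePoissonKernel_mul_abs_sub hy hf).comp
      hsnd).const_mul (2 * (1 + α ^ 2)))
  filter_upwards [self_mem_nhdsWithin] with p ⟨hb, hcone⟩
  exact abs_integral_halfPlanePoissonKernel_mul_sub_le_of_abs_sub_le hf (f y) hb hcone.le
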